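/- Let N = e·m where e = 2^f with f ≥ 1 and m is an odd integer with m > 1. Let c be an integer with c ≡ 0 (mod e) and c ≡ 1 (mod m), and set a = L^c and b = R^c in SL(2,ℤ). Then the element (a·b⁻¹·a)⁴ lies in Γ(N). -/

import Mathlib

/-!
Reduce modulo `N = 2 ^ f * m`. By the Chinese remainder theorem, `c ≡ 0 (mod 2 ^ f)` and
`c ≡ 1 (mod m)` make `t = c mod N` an idempotent of `ℤ/Nℤ`. For idempotent `t` the
reduction of `a * b⁻¹ * a` is `[[1 - t, -t], [t, 1 - t]]`, whose square is the scalar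
`1 - 2t`, and `(1 - 2t)² = 1`.
-/

open Matrix CongruenceSubgroup

local notation "SL2Z" => Matrix.SpecialLinearGroup (Fin 2) ℤ

/-- The matrix `L = [[1,0],[1,1]]` as an element of `SL(2, ℤ)`. -/
def L : SL2Z := ⟨!![1, 0; 1, 1], by norm_num [Matrix.det_fin_two_of]⟩

/-- The matrix `R = [[1,1],[0,1]]` as an element of `SL(2, ℤ)`. -/
def R : SL2Z := ⟨!![1, 1; 0, 1], by norm_num [Matrix.det_fin_two_of]⟩

open ModularGroup Matrix.SpecialLinearGroup

theorem L_eq_S_mul_T_inv_mul_S_inv : L = S * T⁻¹ * S⁻¹ := by decide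

theorem coe_L_zpow (n : ℤ) : ↑(L ^ n) = !![1, 0; n, 1] := by
  rw [L_eq_S_mul_T_inv_mul_S_inv, conj_zpow, _root_.inv_zpow', S_inv, coe_mul, coe_mul, coe_neg,
    coe_T_zpow, coe_S]
  simp

theorem coe_R_zpow (n : ℤ) : ↑(R ^ n) = !![1, n; 0, 1] := coe_T_zpow n

theorem lower_mul_upper_neg_mul_lower_pow_four {A : Type*} [CommRing A] {t : A}
    (ht : IsIdempotentElem t) :
    (!![1, 0; t, 1] * !![1, -t; 0, 1] * !![1, 0; t, 1]) ^ 4 = (1 : Matrix (Fin 2) (Fin 2) A) := by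
  have hM : !![1, 0; t, 1] * !![1, -t; 0, 1] * !![1, 0; t, 1] = !![1 - t, -t; t, 1 - t] := by
    rw [mul_fin_two, mul_fin_two]
    congrm !![?_, ?_; ?_, ?_]
    · linear_combination -ht.eq
    · ring
    · linear_combination -(1 + t) * ht.eq
    · linear_combination -ht.eq
  have hsq : !![1 - t, -t; t, 1 - t] ^ 2 = scalar (Fin 2) (1 - 2 * t) := by
    rw [sq, mul_fin_two, scalar_apply, diagonal_fin_two]
    congrm !![?_, ?_; ?_, ?_]
    · ring
    · linear_combination 2 * ht.eq
    · linear_combination -2 * ht.eq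
    · ring
  have hinvol : (1 - 2 * t) ^ 2 = 1 := by linear_combination 4 * ht.eq
  rw [hM, show 4 = 2 * 2 from rfl, pow_mul, hsq, ← map_pow, hinvol, map_one]

theorem isIdempotentElem_intCast_zmod_mul {d m : ℕ} (hdm : d.Coprime m) {c : ℤ}
    (hd : (d : ℤ) ∣ c) (hm : (m : ℤ) ∣ c - 1) : IsIdempotentElem (c : ZMod (d * m)) := by
  rw [IsIdempotentElem, ← Int.cast_mul, ZMod.intCast_eq_intCast_iff_dvd_sub, Nat.cast_mul,
    show c - c * c = -(c * (c - 1)) by ring, dvd_neg]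
  exact (Nat.isCoprime_iff_coprime.mpr hdm).mul_dvd (hd.mul_right (c - 1)) (hm.mul_left c)

theorem RingHom.mapMatrix_of_fin_two {A B : Type*} [Semiring A] [Semiring B] (φ : A →+* B)
    (w x y z : A) : φ.mapMatrix !![w, x; y, z] = !![φ w, φ x; φ y, φ z] :=
  (etaExpand_eq _).symm

theorem stmt_5_general (f : ℕ) (m : ℕ) (hmodd : Odd m)
    (c : ℤ) (hc0 : c ≡ 0 [ZMOD ((2 : ℤ) ^ f)]) (hc1 : c ≡ 1 [ZMOD (m : ℤ)])
    (a b : SL2Z) (ha : a = L ^ c) (hb : b = R ^ c) :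
    (a * b⁻¹ * a) ^ 4 ∈ Gamma (2 ^ f * m) := by
  have hcop : (2 ^ f).Coprime m := (Nat.coprime_two_left.mpr hmodd).pow_left f
  have hidem : IsIdempotentElem (c : ZMod (2 ^ f * m)) :=
    isIdempotentElem_intCast_zmod_mul hcop (by exact_mod_cast Int.modEq_zero_iff_dvd.mp hc0)
      hc1.symm.dvd
  rw [Gamma_mem', ha, hb, ← _root_.zpow_neg]
  apply Subtype.ext
  rw [map_apply_coe, coe_pow, coe_mul, coe_mul, map_pow, map_mul, map_mul, coe_L_zpow, coe_R_zpow,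
    RingHom.mapMatrix_of_fin_two, RingHom.mapMatrix_of_fin_two, map_one, map_zero, map_neg,
    eq_intCast]
  exact lower_mul_upper_neg_mul_lower_pow_four hidem

theorem stmt_5 (f : ℕ) (hf : 1 ≤ f) (m : ℕ) (hmodd : Odd m) (hm1 : 1 < m)
    (c : ℤ) (hc0 : c ≡ 0 [ZMOD ((2 : ℤ) ^ f)]) (hc1 : c ≡ 1 [ZMOD (m : ℤ)])
    (a b : SL2Z) (ha : a = L ^ c) (hb : b = R ^ c) :
    (a * b⁻¹ * a) ^ 4 ∈ Gamma (2 ^ f * m) :=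
  stmt_5_general f m hmodd c hc0 hc1 a b ha hb
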